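/- arXiv:1209.3808 — 3 statements merged into one kernel-verified Lean document; each statement's English description precedes it below -/
import Mathlib

section
/- With Q(s) and P(s) defined from a block realization as Q = (sI−R)⁻¹(W−R), P = (sI−R)⁻¹V with R = diag(W), and G(s) the transfer function [I 0](sI−A)⁻¹B, one has G(s) = (I−Q(s))⁻¹ P(s) at every s where all the relevant matrices are invertible. -/
open Matrix

theorem G_eq_IminusQ_inv_P {p q m : ℕ}
    (A11 : Matrix (Fin p) (Fin p) ℝ) (A12 : Matrix (Fin p) (Fin q) ℝ)
    (A21 : Matrix (Fin q) (Fin p) ℝ) (A22 : Matrix (Fin q) (Fin q) ℝ)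
    (B1 : Matrix (Fin p) (Fin m) ℝ) (B2 : Matrix (Fin q) (Fin m) ℝ)
    (s : ℝ)
    (W : Matrix (Fin p) (Fin p) ℝ)
    (hW : W = A11 + A12 * (s • (1 : Matrix (Fin q) (Fin q) ℝ) - A22)⁻¹ * A21)
    (V : Matrix (Fin p) (Fin m) ℝ)
    (hV : V = B1 + A12 * (s • (1 : Matrix (Fin q) (Fin q) ℝ) - A22)⁻¹ * B2)
    (R : Matrix (Fin p) (Fin p) ℝ) (hR : R = Matrix.diagonal (fun i => W i i))
    (hA : IsUnit (s • (1 : Matrix (Fin p ⊕ Fin q) (Fin p ⊕ Fin q) ℝ)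
            - Matrix.fromBlocks A11 A12 A21 A22))
    (hA22 : IsUnit (s • (1 : Matrix (Fin q) (Fin q) ℝ) - A22))
    (hRinv : IsUnit (s • (1 : Matrix (Fin p) (Fin p) ℝ) - R))
    (hWinv : IsUnit (s • (1 : Matrix (Fin p) (Fin p) ℝ) - W)) :
    Matrix.fromCols (1 : Matrix (Fin p) (Fin p) ℝ) (0 : Matrix (Fin p) (Fin q) ℝ)
        * (s • (1 : Matrix (Fin p ⊕ Fin q) (Fin p ⊕ Fin q) ℝ)
            - Matrix.fromBlocks A11 A12 A21 A22)⁻¹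
        * Matrix.fromRows B1 B2
    = ((1 : Matrix (Fin p) (Fin p) ℝ)
        - (s • (1 : Matrix (Fin p) (Fin p) ℝ) - R)⁻¹ * (W - R))⁻¹
      * ((s • (1 : Matrix (Fin p) (Fin p) ℝ) - R)⁻¹ * V) := by
  set D : Matrix (Fin q) (Fin q) ℝ := s • (1 : Matrix (Fin q) (Fin q) ℝ) - A22 with hD
  set SW : Matrix (Fin p) (Fin p) ℝ := s • (1 : Matrix (Fin p) (Fin p) ℝ) - W with hSW
  set SR : Matrix (Fin p) (Fin p) ℝ := s • (1 : Matrix (Fin p) (Fin p) ℝ) - R with hSR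
  have hblock : s • (1 : Matrix (Fin p ⊕ Fin q) (Fin p ⊕ Fin q) ℝ)
      - Matrix.fromBlocks A11 A12 A21 A22
      = Matrix.fromBlocks (s • (1 : Matrix (Fin p) (Fin p) ℝ) - A11) (-A12) (-A21) D := by
    ext (i | i) (j | j) <;>
      simp [D, Matrix.fromBlocks, Matrix.one_apply, Matrix.smul_apply, Matrix.sub_apply]
  haveI iD : Invertible D := hA22.invertible
  have hschur : (s • (1 : Matrix (Fin p) (Fin p) ℝ) - A11) - (-A12) * ⅟ D * (-A21) = SW := by
    rw [hSW, hW, Matrix.invOf_eq_nonsing_inv]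
    simp only [Matrix.neg_mul, Matrix.mul_neg, neg_neg]
    abel
  haveI iSW : Invertible SW := hWinv.invertible
  haveI iS1 : Invertible ((s • (1 : Matrix (Fin p) (Fin p) ℝ) - A11) - (-A12) * ⅟ D * (-A21)) :=
    hschur ▸ iSW
  haveI iM : Invertible (Matrix.fromBlocks (s • (1 : Matrix (Fin p) (Fin p) ℝ) - A11)
      (-A12) (-A21) D) := by
    rw [← hblock]; exact hA.invertible
  have hinv := Matrix.invOf_fromBlocks₂₂_eq
      (s • (1 : Matrix (Fin p) (Fin p) ℝ) - A11) (-A12) (-A21) D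
  -- LHS computation
  have hLHS : Matrix.fromCols (1 : Matrix (Fin p) (Fin p) ℝ) (0 : Matrix (Fin p) (Fin q) ℝ)
        * (s • (1 : Matrix (Fin p ⊕ Fin q) (Fin p ⊕ Fin q) ℝ)
            - Matrix.fromBlocks A11 A12 A21 A22)⁻¹
        * Matrix.fromRows B1 B2 = SW⁻¹ * V := by
    have hSinv : ⅟((s • (1 : Matrix (Fin p) (Fin p) ℝ) - A11) - (-A12) * ⅟ D * (-A21))
        = SW⁻¹ := by rw [Matrix.invOf_eq_nonsing_inv, hschur]
    have h2 : ⅟ D = D⁻¹ := Matrix.invOf_eq_nonsing_inv D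
    rw [hblock, ← Matrix.invOf_eq_nonsing_inv, hinv, Matrix.mul_assoc,
      Matrix.fromBlocks_mul_fromRows, Matrix.fromCols_mul_fromRows, hSinv, hV]
    simp only [h2, Matrix.one_mul, Matrix.zero_mul, add_zero, Matrix.neg_mul,
      Matrix.mul_neg, neg_neg, Matrix.mul_add, Matrix.mul_assoc]
  rw [hLHS]
  -- RHS computation
  have hfact : (1 : Matrix (Fin p) (Fin p) ℝ) - SR⁻¹ * (W - R) = SR⁻¹ * SW := by
    have : SW = SR - (W - R) := by rw [hSW, hSR]; abel
    rw [this]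
    conv_rhs => rw [Matrix.mul_sub,
      Matrix.nonsing_inv_mul _ ((Matrix.isUnit_iff_isUnit_det _).mp hRinv)]
  rw [hfact, Matrix.mul_inv_rev, Matrix.nonsing_inv_nonsing_inv _
    ((Matrix.isUnit_iff_isUnit_det _).mp hRinv)]
  rw [← Matrix.mul_assoc, Matrix.mul_assoc SW⁻¹,
    Matrix.mul_nonsing_inv _ ((Matrix.isUnit_iff_isUnit_det _).mp hRinv), Matrix.mul_one]
end

section
/- Let A1 = diag(λ_1,…,λ_l) with distinct λ_i, and let (A1,B1,C1) be as in a Gilbert realization with C1 = [E_1 … E_l]. Let N(s) be a diagonal rational matrix with minimal realization (A2,B2,C2,I), and suppose λ_i is not a pole of N. If the cascade realization of N(s)·(C1(sI−A1)⁻¹B1 + D1) is unobservable at eigenvalue λ_i — i.e., there exists a nonzero vector w = (w1, w2) with (A1−λ_iI)w1 = 0, B2C1w1 + (A2−λ_iI)w2 = 0, and C1w1 + C2w2 = 0 — then N(λ_i)E_i = 0 (after normalizing w1 to the i-th standard basis vector). -/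
open Matrix

theorem pbh_cascade_cancellation {p l n2 : ℕ}
    (lam : Fin l → ℝ) (hlam : Function.Injective lam)
    (C1 : Matrix (Fin p) (Fin l) ℝ)
    (A2 : Matrix (Fin n2) (Fin n2) ℝ)
    (B2 : Matrix (Fin n2) (Fin p) ℝ)
    (C2 : Matrix (Fin p) (Fin n2) ℝ)
    (N : ℝ → Matrix (Fin p) (Fin p) ℝ)
    (hN : ∀ s : ℝ, N s = C2 * (s • (1 : Matrix (Fin n2) (Fin n2) ℝ) - A2)⁻¹ * B2 + 1)
    (i : Fin l) (hne : lam i ≠ 0)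
    (hpole : IsUnit (lam i • (1 : Matrix (Fin n2) (Fin n2) ℝ) - A2))
    (w2 : Fin n2 → ℝ)
    (h1 : B2.mulVec (fun a => C1 a i)
        + (A2 - lam i • (1 : Matrix (Fin n2) (Fin n2) ℝ)).mulVec w2 = 0)
    (h2 : (fun a => C1 a i) + C2.mulVec w2 = 0) :
    (N (lam i)).mulVec (fun a => C1 a i) = 0 := by
  set E : Fin p → ℝ := fun a => C1 a i with hE
  set M : Matrix (Fin n2) (Fin n2) ℝ := lam i • (1 : Matrix (Fin n2) (Fin n2) ℝ) - A2 with hM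
  have hdet : IsUnit M.det := (Matrix.isUnit_iff_isUnit_det M).mp hpole
  have hBE : B2.mulVec E = M.mulVec w2 := by
    have h := eq_neg_of_add_eq_zero_left h1
    rw [h, hM]
    rw [show (A2 - lam i • (1 : Matrix (Fin n2) (Fin n2) ℝ)) = -(lam i • (1 : Matrix (Fin n2) (Fin n2) ℝ) - A2) from (neg_sub _ _).symm]
    rw [Matrix.neg_mulVec, neg_neg]
  have hw2 : M⁻¹.mulVec (B2.mulVec E) = w2 := by
    rw [hBE, Matrix.mulVec_mulVec, Matrix.nonsing_inv_mul M hdet, Matrix.one_mulVec]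
  rw [hN]
  have : (C2 * M⁻¹ * B2 + 1).mulVec E = 0 := by
    rw [Matrix.add_mulVec, Matrix.one_mulVec, Matrix.mul_assoc,
      ← Matrix.mulVec_mulVec, ← Matrix.mulVec_mulVec, hw2]
    have := eq_neg_of_add_eq_zero_left h2
    rw [show C2.mulVec w2 = -E from (eq_neg_of_add_eq_zero_right h2)]
    abel
  exact this
end

section
/- Let E_1,…,E_l ∈ ℝ^p be nonzero vectors, associated with distinct nonzero scalars λ_1,…,λ_l. There exists a constant diagonal matrix R ∈ ℝ^{p×p} such that, with N(s) = (sI−R)s⁻¹, the set S = {i : N(λ_i)E_i = 0} has cardinality k, if and only if there exists a subset S ⊆ {1,…,l} of cardinality k whose vectors {E_i : i ∈ S} have pairwise disjoint supports (i.e., for i ≠ j in S, there is no index m with (E_i)_m ≠ 0 and (E_j)_m ≠ 0). -/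
open Matrix

lemma cancel_iff_aux {p : ℕ} (r : Fin p → ℝ) (c : ℝ) (hc : c ≠ 0) (v : Fin p → ℝ) :
    ((c⁻¹ • (c • (1 : Matrix (Fin p) (Fin p) ℝ) - Matrix.diagonal r)).mulVec v = 0) ↔
    ∀ m, v m ≠ 0 → r m = c := by
  rw [Matrix.smul_mulVec, smul_eq_zero]
  simp only [inv_eq_zero, hc, false_or]
  rw [Matrix.sub_mulVec, Matrix.smul_mulVec, Matrix.one_mulVec]
  constructor
  · intro h m hm
    have := congrFun h m
    simp only [Pi.sub_apply, Pi.smul_apply, Matrix.mulVec_diagonal, Pi.zero_apply,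
      smul_eq_mul, sub_eq_zero] at this
    exact (mul_right_cancel₀ hm this).symm
  · intro h
    funext m
    simp only [Pi.sub_apply, Pi.smul_apply, Matrix.mulVec_diagonal, Pi.zero_apply,
      smul_eq_mul, sub_eq_zero]
    by_cases hm : v m = 0
    · rw [hm]; ring
    · rw [h m hm]

theorem max_cancellation_iff_disjoint_supports {p l : ℕ}
    (lam : Fin l → ℝ) (hlam : Function.Injective lam) (hne : ∀ i, lam i ≠ 0)
    (E : Fin l → (Fin p → ℝ)) (hE : ∀ i, E i ≠ 0) (k : ℕ) :
    (∃ r : Fin p → ℝ,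
        (Finset.univ.filter (fun i : Fin l =>
          ((lam i)⁻¹ • (lam i • (1 : Matrix (Fin p) (Fin p) ℝ)
              - Matrix.diagonal r)).mulVec (E i) = 0)).card = k)
      ↔ (∃ S : Finset (Fin l), S.card = k ∧
          ∀ i ∈ S, ∀ j ∈ S, i ≠ j →
            ∀ m : Fin p, ¬(E i m ≠ 0 ∧ E j m ≠ 0)) := by
  constructor
  · rintro ⟨r, hr⟩
    refine ⟨_, hr, ?_⟩
    intro i hi j hj hij m ⟨him, hjm⟩
    simp only [Finset.mem_filter, Finset.mem_univ, true_and,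
      cancel_iff_aux r _ (hne _)] at hi hj
    exact hij (hlam ((hi m him).symm.trans (hj m hjm)))
  · rintro ⟨S, hSk, hS⟩
    classical
    refine ⟨fun m => if h : ∃ j ∈ S, E j m ≠ 0 then lam h.choose else 0, ?_⟩
    rw [← hSk]
    congr 1
    ext i
    simp only [Finset.mem_filter, Finset.mem_univ, true_and,
      cancel_iff_aux _ _ (hne _)]
    constructor
    · intro h
      by_contra hiS
      -- E i ≠ 0 : pick m with E i m ≠ 0
      obtain ⟨m, hm⟩ := Function.ne_iff.mp (hE i)
      have := h m hm
      by_cases hex : ∃ j ∈ S, E j m ≠ 0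
      · rw [dif_pos hex] at this
        have hj := hex.choose_spec
        have : hex.choose = i := hlam this
        exact hiS (this ▸ hj.1)
      · rw [dif_neg hex] at this
        exact hne i this.symm
    · intro hiS m hm
      have hex : ∃ j ∈ S, E j m ≠ 0 := ⟨i, hiS, hm⟩
      rw [dif_pos hex]
      obtain ⟨hjS, hjm⟩ := hex.choose_spec
      by_cases hji : hex.choose = i
      · rw [hji]
      · exact absurd ⟨hjm, hm⟩ (hS _ hjS i hiS hji m)
end
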